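/- Let G be a finite connected simple graph with a unique perfect matching. Then G has a bridge, i.e., G contains an edge whose deletion disconnects G. -/

import Mathlib

/-- `M` is a perfect matching of `G`, viewed as a set of edges: every edge of `M`
is an edge of `G`, and every vertex of `G` is incident to exactly one edge of `M`. -/
def SimpleGraph.IsPerfectMatchingOn {V : Type*} (G : SimpleGraph V) (M : Set (Sym2 V)) : Prop :=
  M ⊆ G.edgeSet ∧ ∀ v : V, ∃! e, e ∈ M ∧ v ∈ e

/-!
Perfect matchings are handled through their partner maps `σ`. Uniqueness of `σ` means that no
`σ`-closed set of vertices can be paired up along edges of `G` in any other way; in particular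
there is no alternating cycle.

Take an alternating path `f 0, f 1, …` (with `σ (f 0) = f 1`, `σ (f 2) = f 3`, …) that cannot
be extended at `f 0`. If `f 0` has no neighbour besides `f 1`, the matching edge `s(f 0, f 1)` is a
bridge. Otherwise `f 0` is adjacent to some `f t`. An odd `t` would close an alternating cycle, so
`t` is even and `f 0, …, f t` is a blossom with base `f t`; two more alternating cycles show that
its stem `s(f t, f (t + 1))` is the only edge from the blossom to `f (t + 1)`. Contracting the
blossom keeps the graph connected and the matching unique, and every matching bridge of the
contracted graph is a bridge of `G`, so induction on the number of vertices applies.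
-/

open Set Function SimpleGraph

namespace SimpleGraph

variable {V W ι : Type*} {G : SimpleGraph V}

def IsPairingOn (G : SimpleGraph V) (S : Set V) (σ : V → V) : Prop :=
  ∀ v ∈ S, σ v ∈ S ∧ σ (σ v) = v ∧ G.Adj v (σ v)

section Pairing

variable {S : Set V} {σ τ : V → V}

lemma IsPairingOn.compl (hσ : G.IsPairingOn univ σ) (hS : ∀ v ∈ S, σ v ∈ S) :
    G.IsPairingOn Sᶜ σ := fun v hv =>
  ⟨fun hσv => hv ((hσ v trivial).2.1 ▸ hS _ hσv), (hσ v trivial).2⟩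

lemma IsPairingOn.union {S' : Set V} [DecidablePred (· ∈ S)] (hτ : G.IsPairingOn S τ)
    (hσ : G.IsPairingOn S' σ) (hd : Disjoint S S') :
    G.IsPairingOn (S ∪ S') (S.piecewise τ σ) := by
  rintro v (hv | hv)
  · obtain ⟨hτv, hττ, hadj⟩ := hτ v hv
    simp [hv, hτv, hττ, hadj]
  · obtain ⟨hσv, hσσ, hadj⟩ := hσ v hv
    simp [hd.notMem_of_mem_right hv, hd.notMem_of_mem_right hσv, hσv, hσσ, hadj]

lemma IsPairingOn.piecewise [DecidablePred (· ∈ S)] (hτ : G.IsPairingOn S τ)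
    (hσ : G.IsPairingOn Sᶜ σ) : G.IsPairingOn univ (S.piecewise τ σ) := by
  simpa using hτ.union hσ disjoint_compl_right

lemma isPairingOn_pair [DecidableEq V] {a b : V} (h : G.Adj a b) :
    G.IsPairingOn {a, b} (Equiv.swap a b) := by
  rintro v (rfl | rfl)
  · simp [h]
  · simp [h.symm]

lemma IsPairingOn.eqOn_of_unique (hσ : G.IsPairingOn univ σ)
    (huniq : ∀ τ, G.IsPairingOn univ τ → τ = σ) (hS : ∀ v ∈ S, σ v ∈ S)
    (hτ : G.IsPairingOn S τ) : EqOn τ σ S := by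
  classical
  intro v hv
  rw [← huniq _ (hτ.piecewise (hσ.compl hS)), piecewise_eq_of_mem _ _ _ hv]

lemma IsPairingOn.image {f : ι → V} {g : V → ι} {I : Set ι} {ρ : ι → ι}
    (hρ : (G.comap f).IsPairingOn I ρ) (hgf : ∀ i ∈ I, g (f i) = i) :
    G.IsPairingOn (f '' I) (f ∘ ρ ∘ g) := by
  rintro _ ⟨i, hi, rfl⟩
  obtain ⟨hρi, hρρ, hadj⟩ := hρ i hi
  simp only [comp_apply, hgf i hi, hgf _ hρi, hρρ]
  exact ⟨mem_image_of_mem f hρi, trivial, hadj⟩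

lemma IsPairingOn.apply_eq_of_unique [Nonempty ι] (hσ : G.IsPairingOn univ σ)
    (huniq : ∀ τ, G.IsPairingOn univ τ → τ = σ) {f : ι → V} {I : Set ι} {ρ : ι → ι}
    (hf : InjOn f I) (hρ : (G.comap f).IsPairingOn I ρ) (hI : ∀ i ∈ I, σ (f i) ∈ f '' I)
    {i : ι} (hi : i ∈ I) : f (ρ i) = σ (f i) := by
  have hgf : ∀ i ∈ I, invFunOn f I (f i) = i := fun i hi => hf.leftInvOn_invFunOn hi
  have := hσ.eqOn_of_unique huniq (by rintro _ ⟨j, hj, rfl⟩; exact hI j hj)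
    (hρ.image hgf) (mem_image_of_mem f hi)
  simpa [hgf i hi] using this

lemma IsPairingOn.exists_of_comap [Nonempty ι] {f : ι → V} {I : Set ι} {ρ : ι → ι}
    (hf : InjOn f I) (hρ : (G.comap f).IsPairingOn I ρ) : ∃ τ, G.IsPairingOn (f '' I) τ :=
  ⟨_, hρ.image fun _ hi => hf.leftInvOn_invFunOn hi⟩

lemma mk_mem_range_iff (hσ : G.IsPairingOn univ σ) {v w : V} :
    s(v, w) ∈ range (fun u => s(u, σ u)) ↔ w = σ v := by
  constructor
  · rintro ⟨u, hu⟩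
    rcases Sym2.eq_iff.mp hu with ⟨rfl, rfl⟩ | ⟨rfl, rfl⟩
    · rfl
    · exact ((hσ _ trivial).2.1).symm
  · rintro rfl
    exact ⟨v, rfl⟩

lemma isPerfectMatchingOn_range (hσ : G.IsPairingOn univ σ) :
    G.IsPerfectMatchingOn (range fun v => s(v, σ v)) := by
  refine ⟨by rintro _ ⟨v, rfl⟩; exact (hσ v trivial).2.2,
    fun v => ⟨s(v, σ v), ⟨⟨v, rfl⟩, Sym2.mem_mk_left _ _⟩, ?_⟩⟩
  rintro e ⟨he, hve⟩
  obtain ⟨w, rfl⟩ := Sym2.mem_iff_exists.mp hve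
  rw [(mk_mem_range_iff hσ).mp he]

lemma IsPerfectMatchingOn.exists_pairing {M : Set (Sym2 V)} (hM : G.IsPerfectMatchingOn M) :
    ∃ σ, G.IsPairingOn univ σ ∧ M = range fun v => s(v, σ v) := by
  have hpartner : ∀ v, ∃ w, s(v, w) ∈ M ∧ ∀ w', s(v, w') ∈ M → w' = w := by
    intro v
    obtain ⟨e, ⟨he, hve⟩, huniq⟩ := hM.2 v
    obtain ⟨w, rfl⟩ := Sym2.mem_iff_exists.mp hve
    exact ⟨w, he, fun w' hw' => Sym2.congr_right.mp (huniq _ ⟨hw', Sym2.mem_mk_left _ _⟩)⟩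
  choose σ hσM hσuniq using hpartner
  have hσσ : ∀ v, σ (σ v) = v := fun v => (hσuniq _ v (Sym2.eq_swap ▸ hσM v)).symm
  refine ⟨σ, fun v _ => ⟨trivial, hσσ v, hM.1 (hσM v)⟩, ?_⟩
  ext e
  induction e using Sym2.ind with
  | _ v w =>
    exact ⟨fun h => ⟨v, by simp [hσuniq v w h]⟩, by
      rintro ⟨u, hu⟩
      exact hu ▸ hσM u⟩

end Pairing

section Bridge

lemma Reachable.map_of_adj_of_ne {H : SimpleGraph W} {f : V → W}
    (hf : ∀ ⦃u v⦄, G.Adj u v → f u ≠ f v → H.Adj (f u) (f v)) {u v : V}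
    (h : G.Reachable u v) : H.Reachable (f u) (f v) := by
  rw [reachable_iff_reflTransGen] at h ⊢
  refine Relation.ReflTransGen.lift' f (fun a b hab => ?_) u v h
  by_cases hne : f a = f b
  · simp only [onFun, hne, Relation.ReflTransGen.refl]
  · exact Relation.ReflTransGen.single (hf hab hne)

lemma Connected.map_of_surjective {f : V → W} (hG : G.Connected) (hf : Surjective f) :
    (G.map f).Connected := by
  have := hG.nonempty.map f
  refine ⟨fun x y => ?_⟩
  obtain ⟨u, rfl⟩ := hf x
  obtain ⟨v, rfl⟩ := hf y
  exact (hG u v).map_of_adj_of_ne fun _ _ hab hne => map_adj_apply' hab hne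

lemma IsBridge.of_map {f : V → W} {u v : V}
    (hsep : ∀ ⦃a b⦄, G.Adj a b → s(f a, f b) = s(f u, f v) → s(a, b) = s(u, v))
    (h : (G.map f).IsBridge s(f u, f v)) : G.IsBridge s(u, v) := by
  refine fun hr => h (hr.map_of_adj_of_ne fun a b hab hne => ?_)
  rw [deleteEdges_adj] at hab ⊢
  exact ⟨map_adj_apply' hab.1 hne, fun he => hab.2 (hsep hab.1 (Set.mem_singleton_iff.mp he))⟩

lemma isBridge_of_forall_adj_eq {u v : V} (huv : G.Adj u v) (hu : ∀ w, G.Adj u w → w = v) :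
    G.IsBridge s(u, v) := by
  rw [isBridge_iff_forall_walk_mem_edges]
  intro p
  cases p with
  | nil => exact absurd rfl huv.ne
  | cons h p => simp [hu _ h]

end Bridge

/-- `insert z T` is a blossom with base `z` and stem `s(z, σ z)`, in the form needed to contract
it onto `z`. -/
structure IsBlossom (G : SimpleGraph V) (σ : V → V) (T : Set V) (z : V) : Prop where
  notMem : z ∉ T
  nonempty : T.Nonempty
  mapsTo : ∀ v ∈ T, σ v ∈ T
  factorCritical : ∀ t ∈ insert z T, ∃ τ, G.IsPairingOn (insert z T \ {t}) τ
  not_adj_stem : ∀ v ∈ T, ¬ G.Adj v (σ z)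

section Collapse

variable {T : Set V} {z : V} {hz : z ∉ T}

open scoped Classical in
noncomputable def collapse (T : Set V) (z : V) (hz : z ∉ T) (v : V) : {v // v ∉ T} :=
  if h : v ∈ T then ⟨z, hz⟩ else ⟨v, h⟩

lemma collapse_of_notMem {v : V} (hv : v ∉ T) : collapse T z hz v = ⟨v, hv⟩ := dif_neg hv

lemma collapse_val (x : {v // v ∉ T}) : collapse T z hz x.1 = x := collapse_of_notMem x.2

lemma surjective_collapse : Surjective (collapse T z hz) := fun x => ⟨x.1, collapse_val x⟩

lemma collapse_eq_base_iff {v : V} : collapse T z hz v = ⟨z, hz⟩ ↔ v ∈ insert z T := by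
  by_cases hv : v ∈ T
  · simp [collapse, hv]
  · simp [collapse_of_notMem hv, hv]

lemma eq_val_of_collapse_eq {v : V} {x : {v // v ∉ T}} (hx : x ≠ ⟨z, hz⟩)
    (h : collapse T z hz v = x) : v = x.1 := by
  by_cases hv : v ∈ T
  · exact absurd (h ▸ collapse_eq_base_iff.mpr (Or.inr hv)) hx
  · rw [collapse_of_notMem hv] at h
    rw [← h]

variable (hz) in
open scoped Classical in
noncomputable def uncollapse (t : V) (x : {v // v ∉ T}) : V := if x = ⟨z, hz⟩ then t else x.1

lemma collapse_uncollapse {t : V} (ht : t ∈ insert z T) (x : {v // v ∉ T}) :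
    collapse T z hz (uncollapse hz t x) = x := by
  by_cases hx : x = ⟨z, hz⟩
  · simp [uncollapse, hx, collapse_eq_base_iff.mpr ht]
  · simpa [uncollapse, hx] using collapse_val x

lemma uncollapse_base (x : {v // v ∉ T}) : uncollapse hz z x = x.1 := by
  by_cases hx : x = ⟨z, hz⟩ <;> simp [uncollapse, hx]

lemma range_uncollapse (t : V) : range (uncollapse hz t) = (insert z T \ {t})ᶜ := by
  ext v
  simp only [mem_range, mem_compl_iff, mem_sdiff, mem_singleton_iff, not_and, not_not]
  constructor
  · rintro ⟨x, rfl⟩ hx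
    by_cases hxz : x = ⟨z, hz⟩
    · simp [uncollapse, hxz]
    · refine absurd hx ?_
      rintro (h | h)
      · simp [uncollapse, hxz] at h
        exact hxz (Subtype.ext h)
      · simp only [uncollapse, hxz, if_false] at h
        exact x.2 h
  · intro h
    by_cases hv : v ∈ insert z T
    · exact ⟨⟨z, hz⟩, by simp [uncollapse, h hv]⟩
    · have hvT : v ∉ T := fun h => hv (Or.inr h)
      have hvz : (⟨v, hvT⟩ : {v // v ∉ T}) ≠ ⟨z, hz⟩ := fun h =>
        hv (Or.inl (congrArg Subtype.val h))
      exact ⟨⟨v, hvT⟩, by simp [uncollapse, hvz]⟩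

lemma isPairingOn_comap_uncollapse {τ' : {v // v ∉ T} → {v // v ∉ T}}
    (hτ' : (G.map (collapse T z hz)).IsPairingOn univ τ') {t : V}
    (ht : G.Adj t (τ' ⟨z, hz⟩).1) : (G.comap (uncollapse hz t)).IsPairingOn univ τ' := by
  intro x _
  obtain ⟨-, hττ, hne, a, b, hab, ha, hb⟩ := hτ' x trivial
  refine ⟨trivial, hττ, ?_⟩
  by_cases hx : x = ⟨z, hz⟩
  · subst hx
    simpa [uncollapse, Ne.symm hne] using ht
  by_cases hx' : τ' x = ⟨z, hz⟩
  · obtain rfl : x = τ' ⟨z, hz⟩ := hx' ▸ hττ.symm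
    simpa [uncollapse, hx, hx'] using ht.symm
  · simpa [uncollapse, hx, hx', ← eq_val_of_collapse_eq hx ha, ← eq_val_of_collapse_eq hx' hb]
      using hab

end Collapse

namespace IsBlossom

variable {σ : V → V} {T : Set V} {z : V}

lemma card_lt [Finite V] (hB : IsBlossom G σ T z) : Nat.card {v // v ∉ T} < Nat.card V :=
  Finite.card_subtype_lt (x := hB.nonempty.some) (not_not.mpr hB.nonempty.some_mem)

lemma apply_notMem (hσ : G.IsPairingOn univ σ) (hB : IsBlossom G σ T z) {v : V} (hv : v ∉ T) :
    σ v ∉ T := fun h => hv ((hσ v trivial).2.1 ▸ hB.mapsTo _ h)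

lemma isPairingOn_map_collapse (hσ : G.IsPairingOn univ σ) (hB : IsBlossom G σ T z) :
    (G.map (collapse T z hB.notMem)).IsPairingOn univ
      (collapse T z hB.notMem ∘ σ ∘ Subtype.val) := by
  intro x _
  obtain ⟨-, hσσ, hadj⟩ := hσ x.1 trivial
  have hσx := collapse_of_notMem (hz := hB.notMem) (hB.apply_notMem hσ x.2)
  refine ⟨trivial, ?_, ?_⟩
  · simp [hσx, hσσ, collapse_val]
  · simp only [comp_apply, hσx]
    exact ⟨fun h => hadj.ne (congrArg Subtype.val h), x.1, σ x.1, hadj, collapse_val x,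
      hσx⟩

lemma eq_of_isPairingOn_map_collapse (huniq : ∀ τ, G.IsPairingOn univ τ → τ = σ)
    (hB : IsBlossom G σ T z) {τ' : {v // v ∉ T} → {v // v ∉ T}}
    (hτ' : (G.map (collapse T z hB.notMem)).IsPairingOn univ τ') :
    τ' = collapse T z hB.notMem ∘ σ ∘ Subtype.val := by
  classical
  set π := collapse T z hB.notMem
  set z' : {v // v ∉ T} := ⟨z, hB.notMem⟩
  -- `τ'` matches `z'` along an edge of `G` from some `t` in the blossom
  obtain ⟨hne, t, y, hty, htz, hy⟩ := (hτ' z' trivial).2.2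
  obtain rfl : y = (τ' z').1 := eq_val_of_collapse_eq (Ne.symm hne) hy
  have ht : t ∈ insert z T := collapse_eq_base_iff.mp htz
  have hμ := (isPairingOn_comap_uncollapse hτ' hty).image (g := π) fun x _ =>
    collapse_uncollapse ht x
  rw [image_univ, range_uncollapse] at hμ
  obtain ⟨β, hβ⟩ := hB.factorCritical t ht
  have hrematch : ∀ v ∉ insert z T \ {t}, uncollapse hB.notMem t (τ' (π v)) = σ v :=
    fun v hv => by
      simpa [piecewise_eq_of_notMem _ _ _ hv] using congrFun (huniq _ (hβ.piecewise hμ)) v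
  obtain rfl : t = z := by
    by_contra h
    have := hrematch t (by simp)
    simp only [htz, uncollapse, z', Ne.symm hne, if_false] at this
    exact (τ' z').2 (this ▸ hB.mapsTo t (ht.resolve_left h))
  funext x
  have hx := hrematch x.1 (by simp [x.2])
  rw [show π x.1 = x from collapse_val x, uncollapse_base] at hx
  rw [comp_apply, comp_apply, ← hx]
  exact (collapse_val _).symm

lemma eq_of_adj_of_collapse_eq (hσ : G.IsPairingOn univ σ) (hB : IsBlossom G σ T z) {a b u : V}
    (hu : u ∉ T) (hab : G.Adj a b) (ha : collapse T z hB.notMem a = collapse T z hB.notMem u)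
    (hb : collapse T z hB.notMem b = collapse T z hB.notMem (σ u)) : a = u ∧ b = σ u := by
  have hσu := hB.apply_notMem hσ hu
  have hσσ := (hσ u trivial).2.1
  rw [collapse_of_notMem hu] at ha
  rw [collapse_of_notMem hσu] at hb
  by_cases huz : u = z
  · subst huz
    have hb' := eq_val_of_collapse_eq
      (fun h => (hσ u trivial).2.2.ne (congrArg Subtype.val h).symm) hb
    refine ⟨?_, hb'⟩
    rcases collapse_eq_base_iff.mp ha with h | h
    · exact h
    · exact absurd (by simpa [hb'] using hab) (hB.not_adj_stem a h)
  by_cases hσuz : σ u = z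
  · have ha' := eq_val_of_collapse_eq (fun h => huz (congrArg Subtype.val h)) ha
    refine ⟨ha', ?_⟩
    have hb' : collapse T z hB.notMem b = ⟨z, hB.notMem⟩ := by rw [hb]; simp [hσuz]
    rcases collapse_eq_base_iff.mp hb' with h | h
    · rw [h, hσuz]
    · have hu' : u = σ z := by rw [← hσuz, hσσ]
      exact absurd (by simpa [ha', hu'] using hab.symm) (hB.not_adj_stem b h)
  · exact ⟨eq_val_of_collapse_eq (fun h => huz (congrArg Subtype.val h)) ha,
      eq_val_of_collapse_eq (fun h => hσuz (congrArg Subtype.val h)) hb⟩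

lemma isBridge_of_map_collapse (hσ : G.IsPairingOn univ σ) (hB : IsBlossom G σ T z)
    {x : {v // v ∉ T}}
    (h : (G.map (collapse T z hB.notMem)).IsBridge s(x, collapse T z hB.notMem (σ x.1))) :
    G.IsBridge s(x.1, σ x.1) := by
  refine IsBridge.of_map (f := collapse T z hB.notMem) (fun a b hab hs => ?_)
    (by rwa [collapse_val])
  rcases Sym2.eq_iff.mp hs with ⟨ha, hb⟩ | ⟨ha, hb⟩
  · obtain ⟨rfl, rfl⟩ := hB.eq_of_adj_of_collapse_eq hσ x.2 hab ha hb
    rfl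
  · obtain ⟨rfl, rfl⟩ := hB.eq_of_adj_of_collapse_eq hσ x.2 hab.symm hb ha
    exact Sym2.eq_swap

end IsBlossom

def pathMate (i : ℕ) : ℕ := if i % 2 = 0 then i + 1 else i - 1

def pathShift (i : ℕ) : ℕ := if i % 2 = 1 then i + 1 else i - 1

lemma pathMate_lt {i n : ℕ} (hi : i < n) (hn : n % 2 = 0) : pathMate i < n := by
  unfold pathMate; split_ifs <;> omega

lemma pathMate_add_two (i : ℕ) : pathMate (i + 2) = pathMate i + 2 := by
  unfold pathMate; split_ifs <;> omega

structure IsAltPath (G : SimpleGraph V) (σ : V → V) (n : ℕ) (f : ℕ → V) : Prop where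
  injOn : InjOn f (Iio (2 * n))
  apply_mate : ∀ i < 2 * n, σ (f i) = f (pathMate i)
  adj : ∀ i, i % 2 = 1 → i + 1 < 2 * n → G.Adj (f i) (f (i + 1))

namespace IsAltPath

variable {σ : V → V} {n : ℕ} {f : ℕ → V}

lemma adj_succ (hσ : G.IsPairingOn univ σ) (hf : IsAltPath G σ n f) {i : ℕ}
    (hi : i + 1 < 2 * n) : G.Adj (f i) (f (i + 1)) := by
  rcases Nat.mod_two_eq_zero_or_one i with h | h
  · have := hf.apply_mate i (by omega)
    rw [pathMate, if_pos h] at this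
    exact this ▸ (hσ _ trivial).2.2
  · exact hf.adj i h hi

lemma card_le [Finite V] (hf : IsAltPath G σ n f) : 2 * n ≤ Nat.card V := by
  rw [← ncard_Iio_nat (2 * n), ← hf.injOn.ncard_image]
  exact ncard_le_card _

lemma exists_one [Nonempty V] (hσ : G.IsPairingOn univ σ) : ∃ f, IsAltPath G σ 1 f := by
  obtain ⟨v⟩ := ‹Nonempty V›
  obtain ⟨-, hσσ, hadj⟩ := hσ v trivial
  refine ⟨fun i => if i = 0 then v else σ v, ?_, ?_, by omega⟩
  · intro i hi j hj hij
    simp only [mem_Iio] at hi hj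
    interval_cases i <;> interval_cases j <;> simp_all [hadj.ne, hadj.ne']
  · intro i hi
    interval_cases i <;> simp [pathMate, hσσ]

def cons₂ (a b : V) (f : ℕ → V) : ℕ → V
  | 0 => a
  | 1 => b
  | i + 2 => f i

lemma extend (hσ : G.IsPairingOn univ σ) (hf : IsAltPath G σ n f) {w : V}
    (hw : G.Adj (f 0) w) (hwf : w ∉ f '' Iio (2 * n)) :
    IsAltPath G σ (n + 1) (cons₂ (σ w) w f) := by
  obtain ⟨-, hσσ, hwσ⟩ := hσ w trivial
  have hσwf : σ w ∉ f '' Iio (2 * n) := by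
    rintro ⟨i, hi, hfi⟩
    exact hwf ⟨pathMate i, pathMate_lt hi (by omega), by rw [← hf.apply_mate i hi, hfi, hσσ]⟩
  refine ⟨?_, ?_, ?_⟩
  · intro i hi j hj hij
    simp only [mem_Iio] at hi hj
    rcases i with _ | _ | i <;> rcases j with _ | _ | j <;> simp only [cons₂] at hij
    · rfl
    · exact absurd hij hwσ.ne'
    · exact absurd ⟨j, by simp; omega, hij.symm⟩ hσwf
    · exact absurd hij.symm hwσ.ne'
    · rfl
    · exact absurd ⟨j, by simp; omega, hij.symm⟩ hwf
    · exact absurd ⟨i, by simp; omega, hij⟩ hσwf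
    · exact absurd ⟨i, by simp; omega, hij⟩ hwf
    · simp [hf.injOn (by simp; omega) (by simp; omega) hij]
  · intro i hi
    rcases i with _ | _ | i
    · simp [cons₂, pathMate, hσσ]
    · simp [cons₂, pathMate]
    · rw [pathMate_add_two]
      exact hf.apply_mate i (by omega)
  · intro i hi hin
    rcases i with _ | _ | i
    · omega
    · simpa [cons₂] using hw.symm
    · exact hf.adj i (by omega) (by omega)

lemma adj_of_dist_one (hσ : G.IsPairingOn univ σ) (hf : IsAltPath G σ n f) {i j : ℕ}
    (hi : i < 2 * n) (hj : j < 2 * n) (hij : i = j + 1 ∨ j = i + 1) : G.Adj (f i) (f j) := by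
  rcases hij with rfl | rfl
  · exact (hf.adj_succ hσ hi).symm
  · exact hf.adj_succ hσ hj

lemma exists_maximal [Finite V] [Nonempty V] (hσ : G.IsPairingOn univ σ) :
    ∃ n f, 0 < n ∧ IsAltPath G σ n f ∧ ∀ w, G.Adj (f 0) w → w ∈ f '' Iio (2 * n) := by
  classical
  let P n := ∃ f, IsAltPath G σ n f
  have hbound : ∀ n, P n → n ≤ Nat.card V := fun n ⟨f, hf⟩ => by have := hf.card_le; omega
  have hP1 : P 1 := exists_one hσ
  obtain ⟨f, hf⟩ := Nat.findGreatest_spec (hbound 1 hP1) hP1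
  refine ⟨_, f, Nat.le_findGreatest (hbound 1 hP1) hP1, hf, fun w hw => ?_⟩
  by_contra hwf
  have hP : P _ := ⟨_, hf.extend hσ hw hwf⟩
  have := Nat.le_findGreatest (hbound _ hP) hP
  omega

lemma pathMate_eq_of_isPairingOn (hσ : G.IsPairingOn univ σ)
    (huniq : ∀ τ, G.IsPairingOn univ τ → τ = σ) (hf : IsAltPath G σ n f) {I : Set ℕ}
    {ρ : ℕ → ℕ} (hI : I ⊆ Iio (2 * n)) (hmate : ∀ i ∈ I, pathMate i ∈ I)
    (hρ : (G.comap f).IsPairingOn I ρ) {i : ℕ} (hi : i ∈ I) : ρ i = pathMate i := by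
  have hclosed : ∀ j ∈ I, σ (f j) ∈ f '' I := fun j hj =>
    hf.apply_mate j (hI hj) ▸ mem_image_of_mem f (hmate j hj)
  refine hf.injOn (hI (hρ i hi).1) (pathMate_lt (hI hi) (by omega)) ?_
  rw [hσ.apply_eq_of_unique huniq (hf.injOn.mono hI) hρ hclosed hi, hf.apply_mate _ (hI hi)]

lemma isPairingOn_Ico_pathMate (hσ : G.IsPairingOn univ σ) (hf : IsAltPath G σ n f) {a b : ℕ}
    (ha : a % 2 = 0) (hb : b % 2 = 0) (hbn : b ≤ 2 * n) :
    (G.comap f).IsPairingOn (Ico a b) pathMate := by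
  intro i hi
  simp only [mem_Ico] at hi
  refine ⟨?_, ?_, ?_⟩ <;> simp only [pathMate, mem_Ico, comap_adj] <;> split_ifs <;>
    first | omega | exact hf.adj_of_dist_one hσ (by omega) (by omega) (by omega)

lemma isPairingOn_Ioc_pathShift (hσ : G.IsPairingOn univ σ) (hf : IsAltPath G σ n f) {a b : ℕ}
    (ha : a % 2 = 0) (hb : b % 2 = 0) (hbn : b < 2 * n) :
    (G.comap f).IsPairingOn (Ioc a b) pathShift := by
  intro i hi
  simp only [mem_Ioc] at hi
  refine ⟨?_, ?_, ?_⟩ <;> simp only [pathShift, mem_Ioc, comap_adj] <;> split_ifs <;>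
    first | omega | exact hf.adj_of_dist_one hσ (by omega) (by omega) (by omega)

lemma not_adj_of_even_of_odd (hσ : G.IsPairingOn univ σ)
    (huniq : ∀ τ, G.IsPairingOn univ τ → τ = σ) (hf : IsAltPath G σ n f) {p s : ℕ}
    (hp : p % 2 = 0) (hs : s % 2 = 1) (hps : p + 3 ≤ s) (hsn : s < 2 * n) :
    ¬ G.Adj (f p) (f s) := by
  classical
  intro hadj
  have hρ := (hf.isPairingOn_Ioc_pathShift hσ hp (b := s - 1) (by omega) (by omega)).union
    (isPairingOn_pair (G := G.comap f) hadj) (by simp; omega)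
  have := hf.pathMate_eq_of_isPairingOn hσ huniq (by intro i; simp; omega)
    (by intro i; simp [pathMate]; split_ifs <;> omega) hρ (i := p) (by simp)
  simp [pathMate, hp] at this
  omega

lemma not_adj_of_odd_of_chord (hσ : G.IsPairingOn univ σ)
    (huniq : ∀ τ, G.IsPairingOn univ τ → τ = σ) (hf : IsAltPath G σ n f) {r t : ℕ}
    (hr : r % 2 = 1) (ht : t % 2 = 0) (hrt : r < t) (htn : t + 1 < 2 * n)
    (hchord : G.Adj (f 0) (f t)) : ¬ G.Adj (f r) (f (t + 1)) := by
  classical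
  intro hadj
  have hρ := ((hf.isPairingOn_Ioc_pathShift hσ (a := 0) (b := r - 1) rfl (by omega)
    (by omega)).union (isPairingOn_pair (G := G.comap f) hchord) (by simp; omega)).union
    (isPairingOn_pair (G := G.comap f) hadj) (by simp; omega)
  have := hf.pathMate_eq_of_isPairingOn hσ huniq (by intro i; simp; omega)
    (by intro i; simp [pathMate]; split_ifs <;> omega) hρ (i := 0) (by simp)
  simp [pathMate] at this
  omega

lemma exists_isPairingOn_Iic_diff (hσ : G.IsPairingOn univ σ) (hf : IsAltPath G σ n f) {t : ℕ}
    (ht : t % 2 = 0) (htn : t < 2 * n) (hchord : G.Adj (f 0) (f t)) {m : ℕ} (hm : m ≤ t) :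
    ∃ ρ, (G.comap f).IsPairingOn (Iic t \ {m}) ρ := by
  classical
  rcases Nat.mod_two_eq_zero_or_one m with hm2 | hm2
  · have h := (hf.isPairingOn_Ico_pathMate hσ (a := 0) rfl hm2 (by omega)).union
      (hf.isPairingOn_Ioc_pathShift hσ hm2 ht htn)
      (Set.disjoint_left.mpr fun i h₁ h₂ => by simp at h₁ h₂; omega)
    rw [show Ico 0 m ∪ Ioc m t = Iic t \ {m} by ext; simp; omega] at h
    exact ⟨_, h⟩
  · have h := ((hf.isPairingOn_Ioc_pathShift hσ (a := 0) (b := m - 1) rfl (by omega)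
      (by omega)).union (hf.isPairingOn_Ico_pathMate hσ (a := m + 1) (by omega) ht (by omega))
      (Set.disjoint_left.mpr fun i h₁ h₂ => by simp at h₁ h₂; omega)).union
      (isPairingOn_pair (G := G.comap f) hchord) (by simp; omega)
    rw [show Ioc 0 (m - 1) ∪ Ico (m + 1) t ∪ {0, t} = Iic t \ {m} by ext; simp; omega] at h
    exact ⟨_, h⟩

lemma isBlossom_of_chord (hσ : G.IsPairingOn univ σ)
    (huniq : ∀ τ, G.IsPairingOn univ τ → τ = σ) (hf : IsAltPath G σ n f) {t : ℕ}
    (ht : t % 2 = 0) (ht0 : 0 < t) (htn : t < 2 * n) (hchord : G.Adj (f 0) (f t)) :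
    IsBlossom G σ (f '' Iio t) (f t) := by
  have hinj : InjOn f (Iic t) := hf.injOn.mono fun i hi => by simp at hi ⊢; omega
  refine ⟨?_, ⟨f 0, 0, ht0, rfl⟩, ?_, ?_, ?_⟩
  · rintro ⟨i, hi, hfi⟩
    exact absurd (hinj (mem_Iic.mpr (le_of_lt hi)) (mem_Iic.mpr le_rfl) hfi) (ne_of_lt hi)
  · rintro _ ⟨i, hi, rfl⟩
    rw [hf.apply_mate i (by simp at hi; omega)]
    exact mem_image_of_mem f (by simp [pathMate] at hi ⊢; split_ifs <;> omega)
  · rw [← image_insert_eq, Iio_insert]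
    rintro _ ⟨m, hm, rfl⟩
    obtain ⟨ρ, hρ⟩ := hf.exists_isPairingOn_Iic_diff hσ ht htn hchord hm
    rw [← image_singleton, ← hinj.image_sdiff_subset (singleton_subset_iff.mpr hm)]
    exact hρ.exists_of_comap (hinj.mono sdiff_subset)
  · rintro _ ⟨i, hi, rfl⟩ hadj
    rw [hf.apply_mate t htn, pathMate, if_pos ht] at hadj
    rcases Nat.mod_two_eq_zero_or_one i with hi2 | hi2
    · exact hf.not_adj_of_even_of_odd hσ huniq hi2 (by omega) (by simp at hi; omega)
        (by omega) hadj
    · exact hf.not_adj_of_odd_of_chord hσ huniq hi2 ht hi (by omega) hchord hadj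

end IsAltPath

lemma exists_pendant_or_isBlossom [Finite V] [Nonempty V] {σ : V → V}
    (hσ : G.IsPairingOn univ σ) (huniq : ∀ τ, G.IsPairingOn univ τ → τ = σ) :
    (∃ v, ∀ w, G.Adj v w → w = σ v) ∨ ∃ T z, IsBlossom G σ T z := by
  obtain ⟨n, f, hn, hf, hmax⟩ := IsAltPath.exists_maximal hσ
  have hf1 : σ (f 0) = f 1 := hf.apply_mate 0 (by omega)
  refine or_iff_not_imp_left.mpr fun hpend => ?_
  push Not at hpend
  obtain ⟨_, hw, hw1⟩ := hpend (f 0)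
  obtain ⟨m, hm, rfl⟩ := hmax _ hw
  simp only [mem_Iio] at hm
  have hm0 : m ≠ 0 := fun h => hw.ne (by rw [h])
  have hm1 : m ≠ 1 := fun h => hw1 (by rw [h, hf1])
  rcases Nat.mod_two_eq_zero_or_one m with hm2 | hm2
  · exact ⟨_, _, hf.isBlossom_of_chord hσ huniq hm2 (by omega) hm hw⟩
  · exact absurd hw (hf.not_adj_of_even_of_odd hσ huniq rfl hm2 (by omega) hm)

theorem exists_isBridge_of_unique_pairing [Finite V] {σ : V → V} (hG : G.Connected)
    (hσ : G.IsPairingOn univ σ) (huniq : ∀ τ, G.IsPairingOn univ τ → τ = σ) :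
    ∃ v, G.IsBridge s(v, σ v) := by
  induction h : Nat.card V using Nat.strong_induction_on generalizing V with
  | _ n ih =>
  have := hG.nonempty
  rcases exists_pendant_or_isBlossom hσ huniq with ⟨v, hv⟩ | ⟨T, z, hB⟩
  · exact ⟨v, isBridge_of_forall_adj_eq (hσ v trivial).2.2 hv⟩
  · obtain ⟨x, hx⟩ := ih _ (h ▸ hB.card_lt) (hG.map_of_surjective surjective_collapse)
      (hB.isPairingOn_map_collapse hσ) (fun _ hτ => hB.eq_of_isPairingOn_map_collapse huniq hτ)
      rfl
    exact ⟨x.1, hB.isBridge_of_map_collapse hσ hx⟩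

end SimpleGraph

/-- A finite connected simple graph with a unique perfect matching has a bridge. -/
theorem exists_bridge_of_unique_matching {V : Type*} [Fintype V] (G : SimpleGraph V)
    (hG : G.Connected) (M : Set (Sym2 V)) (hM : G.IsPerfectMatchingOn M)
    (huniq : ∀ M' : Set (Sym2 V), G.IsPerfectMatchingOn M' → M' = M) :
    ∃ e : Sym2 V, G.IsBridge e := by
  obtain ⟨σ, hσ, rfl⟩ := hM.exists_pairing
  have huniq' : ∀ τ, G.IsPairingOn univ τ → τ = σ := fun τ hτ => funext fun v =>
    (mk_mem_range_iff hσ).mp (huniq _ (isPerfectMatchingOn_range hτ) ▸ ⟨v, rfl⟩)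
  obtain ⟨v, hv⟩ := exists_isBridge_of_unique_pairing hG hσ huniq'
  exact ⟨_, hv⟩
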